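/- arXiv:2411.01086 — 3 statements merged into one kernel-verified Lean document; each statement's English description precedes it below -/
import Mathlib

section
/- Let F be a finite field, n ≥ 1, and let C be a linear code, i.e., an F-linear subspace of F^n with coordinates indexed by {0, 1, ..., n-1}. Let S ⊆ {1, ..., n-1}. Then the following are equivalent: (i) any two codewords of C that agree on all coordinates in S also agree on coordinate 0 (i.e., the shares at positions in S determine the share at position 0); (ii) there exists a vector v in the dual code C⊥ with v_0 = 1 and supp(v) ⊆ {0} ∪ S. -/
/-!
Subtracting codewords, the shares at `S` determine coordinate `j` iff the coordinate functional
`c ↦ c j` on `C` vanishes on the common kernel of the functionals `c ↦ c i`, `i ∈ S`. By finite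
dimensionality it is then a linear combination `c ↦ ∑ a i * c i` of them, and `v = e_j - a` is
the required dual codeword. Conversely, pairing such a `v` with `c - c'` leaves only
`v j * (c j - c' j)`.
-/

theorem dotProduct_eq_mul_apply_of_forall {ι R : Type*} [Fintype ι] [NonUnitalNonAssocSemiring R]
    {S : Set ι} {j : ι} {v c : ι → R} (hv : ∀ i, v i ≠ 0 → i = j ∨ i ∈ S)
    (hc : ∀ i ∈ S, c i = 0) : v ⬝ᵥ c = v j * c j := by
  refine Finset.sum_eq_single j (fun i _ hij ↦ ?_) (by simp)
  by_cases hvi : v i = 0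
  · simp [hvi]
  · simp [hc i ((hv i hvi).resolve_left hij)]

section

variable {ι F : Type*} [Field F]

def Submodule.Determines (C : Submodule F (ι → F)) (S : Set ι) (j : ι) : Prop :=
  ∀ c ∈ C, ∀ c' ∈ C, (∀ i ∈ S, c i = c' i) → c j = c' j

namespace Submodule

variable (C : Submodule F (ι → F)) {S : Set ι} {j : ι}

theorem determines_iff :
    C.Determines S j ↔ ∀ c ∈ C, (∀ i ∈ S, c i = 0) → c j = 0 := by
  refine ⟨fun h c hc hS ↦ h c hc 0 C.zero_mem hS, fun h c hc c' hc' hS ↦ ?_⟩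
  simpa [sub_eq_zero] using h (c - c') (C.sub_mem hc hc') fun i hi ↦ sub_eq_zero.2 (hS i hi)

variable [Fintype ι]

theorem exists_supported_dotProduct_eq_apply (h : ∀ c ∈ C, (∀ i ∈ S, c i = 0) → c j = 0) :
    ∃ a : ι → F, (∀ i, a i ≠ 0 → i ∈ S) ∧ ∀ c ∈ C, a ⬝ᵥ c = c j := by
  let coord (i : ι) : C →ₗ[F] F := LinearMap.proj i ∘ₗ C.subtype
  have hker : ⨅ i : S, LinearMap.ker (coord i) ≤ LinearMap.ker (coord j) := fun c hc ↦ by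
    simp only [mem_iInf, LinearMap.mem_ker] at hc
    exact h c c.2 fun i hi ↦ hc ⟨i, hi⟩
  have hspan : coord j ∈ span F (coord '' S) := by
    rw [Set.image_eq_range]
    exact FiniteDimensional.mem_span_of_iInf_ker_le_ker hker
  obtain ⟨l, hlS, hl⟩ := Finsupp.mem_span_image_iff_linearCombination F |>.1 hspan
  refine ⟨l, fun i hi ↦ hlS (Finsupp.mem_support_iff.2 hi), fun c hc ↦ ?_⟩
  simpa [coord, Finsupp.linearCombination_apply, Finsupp.sum_fintype, dotProduct] using
    LinearMap.congr_fun hl ⟨c, hc⟩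

theorem determines_iff_exists_dual [DecidableEq ι] (hj : j ∉ S) :
    C.Determines S j ↔ ∃ v : ι → F, (∀ c ∈ C, v ⬝ᵥ c = 0) ∧ v j = 1 ∧
      ∀ i, v i ≠ 0 → i = j ∨ i ∈ S := by
  rw [determines_iff]
  constructor
  · intro h
    obtain ⟨a, haS, ha⟩ := C.exists_supported_dotProduct_eq_apply h
    have haj : a j = 0 := by
      by_contra hne
      exact hj (haS j hne)
    refine ⟨Pi.single j 1 - a, fun c hc ↦ ?_, by simp [haj], fun i hi ↦ ?_⟩
    · simp [sub_dotProduct, ha c hc]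
    · by_cases hij : i = j
      · exact .inl hij
      · exact .inr (haS i (by simpa [hij] using hi))
  · rintro ⟨v, hvC, hvj, hvS⟩ c hc hcS
    simpa [dotProduct_eq_mul_apply_of_forall hvS hcS, hvj] using hvC c hc

end Submodule

end

theorem stmt_0_general (F : Type*) [Field F] (n : ℕ) (hn : 1 ≤ n)
    (C : Submodule F (Fin n → F)) (S : Set (Fin n)) (hS : (⟨0, hn⟩ : Fin n) ∉ S) :
    (∀ c ∈ C, ∀ c' ∈ C, (∀ i ∈ S, c i = c' i) → c ⟨0, hn⟩ = c' ⟨0, hn⟩) ↔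
      (∃ v : Fin n → F, (∀ c ∈ C, ∑ i, v i * c i = 0) ∧ v ⟨0, hn⟩ = 1 ∧
        ∀ i, v i ≠ 0 → i = (⟨0, hn⟩ : Fin n) ∨ i ∈ S) :=
  C.determines_iff_exists_dual hS

/-- Massey secret sharing: the shares at positions in `S` determine the secret
(coordinate `0`) iff there is a dual codeword `v` with `v 0 = 1` and
`supp v ⊆ {0} ∪ S`. -/
theorem stmt_0 (F : Type*) [Field F] [Fintype F] (n : ℕ) (hn : 1 ≤ n)
    (C : Submodule F (Fin n → F)) (S : Set (Fin n)) (hS : (⟨0, hn⟩ : Fin n) ∉ S) :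
    (∀ c ∈ C, ∀ c' ∈ C, (∀ i ∈ S, c i = c' i) → c ⟨0, hn⟩ = c' ⟨0, hn⟩) ↔
      (∃ v : Fin n → F, (∀ c ∈ C, ∑ i, v i * c i = 0) ∧ v ⟨0, hn⟩ = 1 ∧
        ∀ i, v i ≠ 0 → i = (⟨0, hn⟩ : Fin n) ∨ i ∈ S) :=
  stmt_0_general F n hn C S hS
end

section
/- Let F be a finite field, n ≥ 1, and let C ⊆ F^n be a linear code with coordinates indexed by {0, ..., n-1}. Let S ⊆ {1, ..., n-1}, and suppose that every vector v ∈ C⊥ with supp(v) ⊆ {0} ∪ S satisfies v_0 = 0. Then for every assignment φ : S → F and every pair of values s, s′ ∈ F, the number of codewords c ∈ C with c_0 = s and c_i = φ(i) for all i ∈ S equals the number of codewords c ∈ C with c_0 = s′ and c_i = φ(i) for all i ∈ S. (That is, the shares at positions in S reveal no information about the secret: every secret value is consistent with the observed shares in equally many ways.) -/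
open Classical in
/-- If every dual codeword supported on `{0} ∪ S` vanishes at coordinate `0`, then
the shares at positions in `S` reveal nothing about the secret: for any observed
shares `φ` on `S`, every secret value `s` is consistent with equally many codewords. -/
theorem stmt_2 (F : Type*) [Field F] [Fintype F] (n : ℕ) (hn : 1 ≤ n)
    (C : Submodule F (Fin n → F)) (S : Set (Fin n)) (hS : (⟨0, hn⟩ : Fin n) ∉ S)
    (hdual : ∀ v : Fin n → F, (∀ c ∈ C, ∑ i, v i * c i = 0) →
      (∀ i, v i ≠ 0 → i = (⟨0, hn⟩ : Fin n) ∨ i ∈ S) → v ⟨0, hn⟩ = 0) :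
    ∀ (φ : Fin n → F) (s s' : F),
      Set.ncard {c : Fin n → F | c ∈ C ∧ c ⟨0, hn⟩ = s ∧ ∀ i ∈ S, c i = φ i} =
      Set.ncard {c : Fin n → F | c ∈ C ∧ c ⟨0, hn⟩ = s' ∧ ∀ i ∈ S, c i = φ i} := by
  set z : Fin n := ⟨0, hn⟩ with hz
  -- Step 1: there is a codeword with value 1 at z and 0 on S.
  have key : ∃ c₀ ∈ C, c₀ z = 1 ∧ ∀ i ∈ S, c₀ i = 0 := by
    -- projection onto coordinates {z} ∪ S
    let P : (Fin n → F) →ₗ[F] (Fin n → F) :=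
      { toFun := fun c i => if i = z ∨ i ∈ S then c i else 0
        map_add' := by intro a b; funext i; by_cases h : i = z ∨ i ∈ S <;> simp [h]
        map_smul' := by intro r a; funext i; by_cases h : i = z ∨ i ∈ S <;> simp [h] }
    have hmem : (Pi.single z 1 : Fin n → F) ∈ Submodule.map P C := by
      by_contra hne
      rw [← Subspace.forall_mem_dualAnnihilator_apply_eq_zero_iff] at hne
      push_neg at hne
      obtain ⟨ψ, hψ, hψne⟩ := hne
      rw [Submodule.mem_dualAnnihilator] at hψ
      set v : Fin n → F := fun i => if i = z ∨ i ∈ S then ψ (Pi.single i 1) else 0 with hv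
      have expand : ∀ c : Fin n → F, ∑ i, v i * c i = ψ (P c) := by
        intro c
        have : P c = ∑ i, Pi.single i ((P c) i) := by
          exact (Finset.univ_sum_single (P c)).symm
        rw [this, map_sum]
        refine Finset.sum_congr rfl fun i _ => ?_
        by_cases h : i = z ∨ i ∈ S
        · have : (Pi.single i ((P c) i) : Fin n → F) = (c i) • (Pi.single i 1 : Fin n → F) := by
            funext j
            by_cases hj : j = i <;> simp [hj, P, Pi.single_apply, h]
          rw [this, map_smul, smul_eq_mul, hv]
          simp only [h, if_true]
          ring
        · simp [hv, h, P]
      have hv0 : v z = 0 := by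
        refine hdual v (fun c hc => ?_) (fun i hi => ?_)
        · rw [expand]
          exact hψ _ (Submodule.mem_map_of_mem hc)
        · by_contra hcon
          push_neg at hcon
          simp only [hv] at hi
          rw [if_neg] at hi
          · exact hi rfl
          · tauto
      apply hψne
      have hvz : v z = ψ (Pi.single z 1) := by simp [hv]
      rw [← hvz, hv0]
    obtain ⟨c₀, hc₀, hPc₀⟩ := hmem
    refine ⟨c₀, hc₀, ?_, ?_⟩
    · have := congrFun hPc₀ z
      simpa [P] using this
    · intro i hi
      have := congrFun hPc₀ i
      have hiz : i ≠ z := fun h => hS (h ▸ hi)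
      simp [P, hi, Pi.single_apply, hiz] at this
      exact this
  intro φ s s'
  obtain ⟨c₀, hc₀C, hc₀z, hc₀S⟩ := key
  set d : Fin n → F := (s' - s) • c₀ with hd
  have hinj : Function.Injective (fun c : Fin n → F => c + d) :=
    fun a b h => by simpa using h
  have himg : (fun c : Fin n → F => c + d) ''
      {c : Fin n → F | c ∈ C ∧ c z = s ∧ ∀ i ∈ S, c i = φ i} =
      {c : Fin n → F | c ∈ C ∧ c z = s' ∧ ∀ i ∈ S, c i = φ i} := by
    ext x
    simp only [Set.mem_image, Set.mem_setOf_eq]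
    constructor
    · rintro ⟨c, ⟨hcC, hcz, hcS⟩, rfl⟩
      refine ⟨C.add_mem hcC (C.smul_mem _ hc₀C), ?_, ?_⟩
      · simp [hd, hcz, hc₀z]
      · intro i hi
        simp [hd, hcS i hi, hc₀S i hi]
    · rintro ⟨hxC, hxz, hxS⟩
      refine ⟨x - d, ⟨C.sub_mem hxC (C.smul_mem _ hc₀C), ?_, ?_⟩, by abel⟩
      · simp [hd, hxz, hc₀z]
      · intro i hi
        simp [hd, hxS i hi, hc₀S i hi]
  calc Set.ncard {c : Fin n → F | c ∈ C ∧ c z = s ∧ ∀ i ∈ S, c i = φ i}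
      = Set.ncard ((fun c : Fin n → F => c + d) ''
          {c : Fin n → F | c ∈ C ∧ c z = s ∧ ∀ i ∈ S, c i = φ i}) :=
        (Set.ncard_image_of_injective _ hinj).symm
    _ = _ := by rw [himg]
end

section
/- Let F be a finite field with q elements, n ≥ 1, and let D be an F-linear subspace of F^n (coordinates indexed 0,...,n-1) of dimension r ≥ 1. Suppose that every nonzero vector of D is a minimal vector of D, and that there exists w ∈ D with w_0 ≠ 0. Then the collection of sets {supp(v) \ {0} : v ∈ D, v_0 = 1} has cardinality exactly q^{r−1}. (In the secret-sharing scheme whose dual code has row space D, this says there are exactly q^{r−1} minimal access sets.) -/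
/-- If every nonzero vector of an `r`-dimensional subspace `D ⊆ F^n` is a minimal
vector of `D`, and some vector of `D` is nonzero at coordinate `0`, then there are
exactly `q^(r-1)` minimal access sets `supp v \ {0}` for `v ∈ D` with `v 0 = 1`. -/
theorem stmt_6 (F : Type*) [Field F] [Fintype F] (q : ℕ) (hq : q = Fintype.card F)
    (n : ℕ) (hn : 1 ≤ n) (D : Submodule F (Fin n → F))
    (r : ℕ) (hr : 1 ≤ r) (hdim : Module.finrank F D = r)
    (hmin : ∀ w ∈ D, w ≠ 0 → ∀ v ∈ D, v ≠ 0 →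
      {i | v i ≠ 0} ⊆ {i | w i ≠ 0} → ∃ a : F, a ≠ 0 ∧ v = a • w)
    (hex : ∃ w ∈ D, w ⟨0, hn⟩ ≠ 0) :
    Set.ncard {A : Set (Fin n) | ∃ v ∈ D, v ⟨0, hn⟩ = 1 ∧
      A = {i | v i ≠ 0} \ {(⟨0, hn⟩ : Fin n)}} = q ^ (r - 1) := by
  classical
  set z : Fin n := ⟨0, hn⟩ with hz
  obtain ⟨w, hwD, hw0⟩ := hex
  set w' : Fin n → F := (w z)⁻¹ • w with hw'
  have hw'D : w' ∈ D := D.smul_mem _ hwD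
  have hw'0 : w' z = 1 := by simp [hw', inv_mul_cancel₀ hw0]
  set T : Set (Fin n → F) := {v | v ∈ D ∧ v z = 1} with hT
  have hset : {A : Set (Fin n) | ∃ v ∈ D, v z = 1 ∧ A = {i | v i ≠ 0} \ {z}}
      = (fun v : Fin n → F => {i | v i ≠ 0} \ {z}) '' T := by
    ext A
    simp only [Set.mem_image, Set.mem_setOf_eq, hT]
    constructor
    · rintro ⟨v, h1, h2, h3⟩; exact ⟨v, ⟨h1, h2⟩, h3.symm⟩
    · rintro ⟨v, ⟨h1, h2⟩, h3⟩; exact ⟨v, h1, h2, h3.symm⟩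
  have hinj : Set.InjOn (fun v : Fin n → F => {i | v i ≠ 0} \ {z}) T := by
    rintro v₁ ⟨h1D, h10⟩ v₂ ⟨h2D, h20⟩ h
    have hs : {i | v₁ i ≠ 0} = {i | v₂ i ≠ 0} := by
      have hz1 : z ∈ {i | v₁ i ≠ 0} := by simp [h10]
      have hz2 : z ∈ {i | v₂ i ≠ 0} := by simp [h20]
      have e1 : {i | v₁ i ≠ 0} = ({i | v₁ i ≠ 0} \ {z}) ∪ {z} := by
        rw [Set.diff_union_self]; exact (Set.union_eq_self_of_subset_right (by simpa using hz1)).symm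
      have e2 : {i | v₂ i ≠ 0} = ({i | v₂ i ≠ 0} \ {z}) ∪ {z} := by
        rw [Set.diff_union_self]; exact (Set.union_eq_self_of_subset_right (by simpa using hz2)).symm
      rw [e1, e2]
      exact congrArg (· ∪ {z}) h
    have h1ne : v₁ ≠ 0 := fun hc => by simp [hc] at h10
    have h2ne : v₂ ≠ 0 := fun hc => by simp [hc] at h20
    obtain ⟨a, ha, hav⟩ := hmin v₂ h2D h2ne v₁ h1D h1ne (hs.le)
    have : a = 1 := by
      have := congrFun hav z
      simp [h10, h20] at this
      simpa using this.symm
    simpa [this] using hav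
  rw [hset, Set.ncard_image_of_injOn hinj]
  -- now count T
  let φ : D →ₗ[F] F := (LinearMap.proj z).comp D.subtype
  have hφsurj : Function.Surjective φ := by
    intro c
    exact ⟨c • ⟨w', hw'D⟩, by simp [φ, hw'0]⟩
  have hker : Module.finrank F (LinearMap.ker φ) = r - 1 := by
    have h1 := LinearMap.finrank_range_add_finrank_ker φ
    rw [hdim, LinearMap.range_eq_top.mpr hφsurj, finrank_top, Module.finrank_self] at h1
    omega
  have e : LinearMap.ker φ ≃ T := by
    refine ⟨fun u => ⟨w' + u.1.1, D.add_mem hw'D u.1.2, ?_⟩,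
      fun v => ⟨⟨v.1 - w', D.sub_mem v.2.1 hw'D⟩, ?_⟩, ?_, ?_⟩
    · have h0 : u.1.1 z = 0 := u.2
      simp [hw'0, h0]
    · show v.1 z - w' z = 0
      rw [v.2.2, hw'0, sub_self]
    · intro u; ext i; simp
    · intro v; ext i; simp
  have : Set.ncard T = Nat.card (LinearMap.ker φ) := by
    rw [Set.ncard_eq_toFinset_card', Set.toFinset_card, ← Nat.card_eq_fintype_card]
    exact (Nat.card_congr e).symm
  rw [this, Nat.card_eq_fintype_card, Module.card_eq_pow_finrank (K := F), hker, hq]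
end
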